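/- arXiv:2602.06788 — 2 statements merged into one kernel-verified Lean document; each statement's English description precedes it below -/
import Mathlib

section
/- Let f : [0,∞) → ℝ be continuous on [0,∞) and continuously differentiable on (0,∞), and suppose lim_{t→0⁺} f'(t) = −∞. Then for every n ≥ 1, every r ∈ ℝⁿ, every q ∈ Δⁿ with qᵢ > 0 for all i, and every β > 0, every maximizer p of g(p) = Σᵢ rᵢ pᵢ − β Σᵢ qᵢ f(pᵢ/qᵢ) over Δⁿ satisfies pᵢ > 0 for all i ∈ {1,…,n}. -/
open Finset Filter Set Topology

/-- The probability simplex Δⁿ in ℝⁿ (indexed by `Fin n`). -/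
def simplex (n : ℕ) : Set (Fin n → ℝ) :=
  {p | (∀ i, 0 ≤ p i) ∧ ∑ i, p i = 1}

/-- The objective `g(p) = Σᵢ rᵢ pᵢ − β Σᵢ qᵢ f(pᵢ/qᵢ)`. -/
noncomputable def obj (n : ℕ) (r q : Fin n → ℝ) (β : ℝ) (f : ℝ → ℝ)
    (p : Fin n → ℝ) : ℝ :=
  (∑ i, r i * p i) - β * ∑ i, q i * f (p i / q i)

/-! If a maximizer `p` had `p i = 0`, move a small mass `ε` to `i` from a coordinate `j` with
`p j > 0`. Per unit of mass, `g` changes by `r i - r j - β (s₀(ε) - s₁(ε))`, where `s₀` is the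
slope of `f` on `[0, ε / q i]` and `s₁` its slope on `[p j / q j - ε / q j, p j / q j]`. By the
mean value theorem `s₀ → -∞` as `ε → 0⁺`, while `s₁ → f' (p j / q j)`, so small transfers
strictly increase `g`. -/

section Transfer

variable {ι : Type*} [DecidableEq ι]

def transfer (p : ι → ℝ) (i j : ι) (ε : ℝ) : ι → ℝ :=
  p + ε • (Pi.single i 1 - Pi.single j 1)

variable {p : ι → ℝ} {i j : ι} {ε : ℝ}

theorem transfer_apply_left (hij : i ≠ j) : transfer p i j ε i = p i + ε := by
  simp [transfer, hij]

theorem transfer_apply_right (hij : i ≠ j) : transfer p i j ε j = p j - ε := by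
  simp [transfer, hij.symm, sub_eq_add_neg]

theorem transfer_apply_of_ne {k : ι} (hki : k ≠ i) (hkj : k ≠ j) :
    transfer p i j ε k = p k := by
  simp [transfer, hki, hkj]

theorem sum_comp_transfer_sub [Fintype ι] (φ : ι → ℝ → ℝ) (hij : i ≠ j) :
    ∑ k, φ k (transfer p i j ε k) - ∑ k, φ k (p k) =
      (φ i (p i + ε) - φ i (p i)) + (φ j (p j - ε) - φ j (p j)) := by
  rw [← Finset.sum_sub_distrib, Fintype.sum_eq_add i j hij,
    transfer_apply_left hij, transfer_apply_right hij]
  rintro k ⟨hki, hkj⟩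
  rw [transfer_apply_of_ne hki hkj, sub_self]

end Transfer

theorem transfer_mem_simplex {n : ℕ} {p : Fin n → ℝ} {i j : Fin n} {ε : ℝ} (hp : p ∈ simplex n)
    (hij : i ≠ j) (hε : 0 ≤ ε) (hεp : ε ≤ p j) : transfer p i j ε ∈ simplex n := by
  obtain ⟨hp_nonneg, hp_sum⟩ := hp
  refine ⟨fun k => ?_, ?_⟩
  · rcases eq_or_ne k i with rfl | hki
    · rw [transfer_apply_left hij]; linarith [hp_nonneg k]
    rcases eq_or_ne k j with rfl | hkj
    · rw [transfer_apply_right hij]; linarith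
    rw [transfer_apply_of_ne hki hkj]; exact hp_nonneg k
  · have := sum_comp_transfer_sub (p := p) (ε := ε) (fun _ x => x) hij
    linarith

theorem exists_pos_of_mem_simplex {n : ℕ} {p : Fin n → ℝ} (hp : p ∈ simplex n) :
    ∃ j, 0 < p j := by
  obtain ⟨j, -, hj⟩ := exists_lt_of_sum_lt (s := univ) (f := 0) (g := p) (by simp [hp.2])
  exact ⟨j, hj⟩

theorem obj_eq_sum (n : ℕ) (r q : Fin n → ℝ) (β : ℝ) (f : ℝ → ℝ) (p : Fin n → ℝ) :
    obj n r q β f p = ∑ k, (r k * p k - β * (q k * f (p k / q k))) := by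
  rw [obj, Finset.sum_sub_distrib, Finset.mul_sum]

theorem obj_transfer_sub {n : ℕ} (r q : Fin n → ℝ) (β : ℝ) (f : ℝ → ℝ) (p : Fin n → ℝ)
    {i j : Fin n} (hij : i ≠ j) {ε : ℝ} (hε : ε ≠ 0) :
    obj n r q β f (transfer p i j ε) - obj n r q β f p =
      ε * (r i - r j - β * (slope f (p i / q i) ((p i + ε) / q i)
        - slope f (p j / q j) ((p j - ε) / q j))) := by
  have h := sum_comp_transfer_sub (p := p) (ε := ε)
    (fun k x => r k * x - β * (q k * f (x / q k))) hij
  have hdi : (p i + ε) / q i - p i / q i = ε / q i := by ring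
  have hdj : (p j - ε) / q j - p j / q j = -(ε / q j) := by ring
  rw [obj_eq_sum, obj_eq_sum, h, slope_def_field, slope_def_field, hdi, hdj]
  field_simp
  ring

theorem tendsto_slope_atBot_of_tendsto_deriv {f : ℝ → ℝ} {a : ℝ}
    (hf_cont : ContinuousOn f (Ici a)) (hf_diff : ∀ t ∈ Ioi a, DifferentiableAt ℝ f t)
    (hlim : Tendsto (deriv f) (𝓝[>] a) atBot) :
    Tendsto (slope f a) (𝓝[>] a) atBot := by
  refine tendsto_atBot.2 fun M => ?_
  obtain ⟨u, hau, hu⟩ :=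
    mem_nhdsGT_iff_exists_Ioo_subset.1 (hlim.eventually (eventually_le_atBot M))
  filter_upwards [Ioo_mem_nhdsGT hau] with t ht
  obtain ⟨c, hc, hcd⟩ := exists_deriv_eq_slope f ht.1 (hf_cont.mono Icc_subset_Ici_self)
    fun x hx => (hf_diff x hx.1).differentiableWithinAt
  rw [slope_def_field, ← hcd]
  exact hu ⟨hc.1, hc.2.trans ht.2⟩

theorem eventually_obj_lt_obj_transfer {f : ℝ → ℝ}
    (hf_cont : ContinuousOn f (Ici 0)) (hf_diff : ∀ t ∈ Ioi (0 : ℝ), DifferentiableAt ℝ f t)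
    (hlim : Tendsto (deriv f) (𝓝[>] 0) atBot) {n : ℕ} (r : Fin n → ℝ) {q : Fin n → ℝ} {β : ℝ}
    (hβ : 0 < β) {p : Fin n → ℝ} {i j : Fin n} (hij : i ≠ j) (hpi : p i = 0) (hpj : 0 < p j)
    (hqi : 0 < q i) (hqj : 0 < q j) :
    ∀ᶠ ε in 𝓝[>] 0, obj n r q β f p < obj n r q β f (transfer p i j ε) := by
  have h_div : Tendsto (fun ε => ε / q i) (𝓝[>] 0) (𝓝[>] 0) := by
    refine tendsto_nhdsWithin_iff.2 ⟨?_, ?_⟩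
    · simpa using ((continuous_id.div_const (q i)).tendsto 0).mono_left nhdsWithin_le_nhds
    · filter_upwards [self_mem_nhdsWithin] with ε hε using div_pos hε hqi
  have h_sub : Tendsto (fun ε => (p j - ε) / q j) (𝓝[>] 0) (𝓝[≠] (p j / q j)) := by
    refine tendsto_nhdsWithin_iff.2 ⟨?_, ?_⟩
    · simpa using (((continuous_const.sub continuous_id).div_const (q j)).tendsto 0).mono_left
        nhdsWithin_le_nhds
    · filter_upwards [self_mem_nhdsWithin] with ε (hε : 0 < ε)
      simp only [mem_compl_iff, mem_singleton_iff]
      rw [div_left_inj' hqj.ne']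
      linarith
  have h_left : Tendsto (fun ε => slope f (p i / q i) ((p i + ε) / q i)) (𝓝[>] 0) atBot := by
    simp only [hpi, zero_div, zero_add]
    exact (tendsto_slope_atBot_of_tendsto_deriv hf_cont hf_diff hlim).comp h_div
  have h_right : Tendsto (fun ε => slope f (p j / q j) ((p j - ε) / q j)) (𝓝[>] 0)
      (𝓝 (deriv f (p j / q j))) :=
    (hf_diff _ (div_pos hpj hqj)).hasDerivAt.tendsto_slope.comp h_sub
  have h_gain : Tendsto (fun ε => r i - r j - β * (slope f (p i / q i) ((p i + ε) / q i)
      - slope f (p j / q j) ((p j - ε) / q j))) (𝓝[>] 0) atTop := by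
    have h_diff := (h_left.atBot_add h_right.neg).const_mul_atBot hβ
    simpa only [sub_eq_add_neg, Function.comp_apply] using
      tendsto_atTop_add_const_left _ (r i - r j) (tendsto_neg_atBot_atTop.comp h_diff)
  filter_upwards [h_gain.eventually_gt_atTop 0, self_mem_nhdsWithin] with ε h_pos (hε : 0 < ε)
  rw [← sub_pos, obj_transfer_sub r q β f p hij hε.ne']
  exact mul_pos hε h_pos

theorem stmt3_general (f : ℝ → ℝ)
    (hf_cont : ContinuousOn f (Set.Ici 0))
    (hf_diff : ∀ t ∈ Set.Ioi (0 : ℝ), DifferentiableAt ℝ f t)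
    (hlim : Tendsto (deriv f) (nhdsWithin 0 (Set.Ioi 0)) atBot)
    (n : ℕ) (r q : Fin n → ℝ)
    (hq_pos : ∀ i, 0 < q i)
    (β : ℝ) (hβ : 0 < β)
    (p : Fin n → ℝ) (hp : p ∈ simplex n)
    (hmax : ∀ p' ∈ simplex n, obj n r q β f p' ≤ obj n r q β f p) :
    ∀ i, 0 < p i := by
  intro i
  obtain ⟨j, hpj⟩ := exists_pos_of_mem_simplex hp
  refine (hp.1 i).lt_of_ne' fun hpi => ?_
  have hij : i ≠ j := by rintro rfl; exact hpj.ne' hpi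
  have h_gain := eventually_obj_lt_obj_transfer hf_cont hf_diff hlim r hβ hij hpi hpj
    (hq_pos i) (hq_pos j)
  have h_small : ∀ᶠ ε in 𝓝[>] 0, ε ≤ p j := nhdsWithin_le_nhds (eventually_le_nhds hpj)
  obtain ⟨ε, h_lt, hε_pos, hε_le⟩ := (h_gain.and (eventually_mem_nhdsWithin.and h_small)).exists
  exact (hmax _ (transfer_mem_simplex hp hij hε_pos.le hε_le)).not_gt h_lt

/-- if `lim_{t→0⁺} f'(t) = −∞`, then every maximizer of `g` over the
simplex has all coordinates strictly positive. -/
theorem stmt3 (f : ℝ → ℝ)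
    (hf_cont : ContinuousOn f (Set.Ici 0))
    (hf_diff : ∀ t ∈ Set.Ioi (0 : ℝ), DifferentiableAt ℝ f t)
    (hf_deriv_cont : ContinuousOn (deriv f) (Set.Ioi 0))
    (hlim : Tendsto (deriv f) (nhdsWithin 0 (Set.Ioi 0)) atBot)
    (n : ℕ) (hn : 1 ≤ n) (r q : Fin n → ℝ)
    (hq : q ∈ simplex n) (hq_pos : ∀ i, 0 < q i)
    (β : ℝ) (hβ : 0 < β)
    (p : Fin n → ℝ) (hp : p ∈ simplex n)
    (hmax : ∀ p' ∈ simplex n, obj n r q β f p' ≤ obj n r q β f p) :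
    ∀ i, 0 < p i :=
  stmt3_general f hf_cont hf_diff hlim n r q hq_pos β hβ p hp hmax
end

section
/- Let f : [0,∞) → ℝ be convex, continuous on [0,∞), and differentiable on (0,∞), and assume f' : (0,∞) → ℝ is a strictly increasing bijection onto ℝ, with inverse (f')⁻¹ : ℝ → (0,∞). Fix n ≥ 2, a strict subset S ⊊ {1,…,n} (S nonempty), r ∈ ℝⁿ, q ∈ Δⁿ with qᵢ > 0 for all i, and β > 0. Set r̂ = max_{i∉S} rᵢ and zᵢ = qᵢ (f')⁻¹((rᵢ − r̂)/β) for i ∈ S, and suppose Σ_{i∈S} zᵢ ≥ 1. Then there exists μ ∈ ℝ with Σ_{i∈S} qᵢ (f')⁻¹((rᵢ + μ)/β) = 1, and for any such μ, the vector p* ∈ Δⁿ defined by p*ᵢ = qᵢ (f')⁻¹((rᵢ + μ)/β) for i ∈ S and p*ᵢ = 0 for i ∉ S is the unique maximizer of h(p) = Σᵢ rᵢ pᵢ − β Σ_{i∈S} qᵢ f(pᵢ/qᵢ) over Δⁿ. -/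
/-!
Strict monotonicity of `f'` makes `f` strictly convex on `[0, ∞)`. For a multiplier `μ`, the
objective on the simplex equals
`∑_{i ∈ S} ((rᵢ + μ) pᵢ - β qᵢ f(pᵢ/qᵢ)) + ∑_{i ∉ S} (rᵢ + μ) pᵢ - μ`.
By the tangent-line inequality, each term over `S` has the unique maximiser
`pᵢ = qᵢ (f')⁻¹((rᵢ + μ)/β)`, and each term off `S` is `≤ 0` as soon as `μ ≤ -r̂`. The mass
`∑_{i ∈ S} qᵢ (f')⁻¹((rᵢ + μ)/β)` is continuous and strictly increasing in `μ`, at most `1` for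
very negative `μ` and at least `1` at `μ = -r̂`; so the intermediate value theorem gives a `μ` with
mass `1`, and every such `μ` satisfies `μ ≤ -r̂`.
-/

open Finset

/-- The partial-sum objective `h(p) = Σᵢ rᵢ pᵢ − β Σ_{i∈S} qᵢ f(pᵢ/qᵢ)`, where
the regularization term runs only over in-sample indices `S`. -/
noncomputable def pobj (n : ℕ) (S : Finset (Fin n)) (r q : Fin n → ℝ) (β : ℝ)
    (f : ℝ → ℝ) (p : Fin n → ℝ) : ℝ :=
  (∑ i, r i * p i) - β * ∑ i ∈ S, q i * f (p i / q i)

theorem StrictConvexOn.add_deriv_mul_sub_lt {D : Set ℝ} {f : ℝ → ℝ} (hf : StrictConvexOn ℝ D f)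
    {x₀ x : ℝ} (hx₀ : x₀ ∈ D) (hx : x ∈ D) (hne : x ≠ x₀) (hfd : DifferentiableAt ℝ f x₀) :
    f x₀ + deriv f x₀ * (x - x₀) < f x := by
  rcases hne.lt_or_gt with h | h
  · have := hf.slope_lt_deriv hx hx₀ h hfd
    rw [slope_def_field, div_lt_iff₀ (sub_pos.2 h)] at this
    linarith
  · have := hf.deriv_lt_slope hx₀ hx h hfd
    rw [slope_def_field, lt_div_iff₀ (sub_pos.2 h)] at this
    linarith

theorem StrictConvexOn.linear_sub_perspective_lt {f : ℝ → ℝ} (hf : StrictConvexOn ℝ (Set.Ici 0) f)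
    {x₀ a β c t : ℝ} (hx₀ : 0 < x₀) (hfd : DifferentiableAt ℝ f x₀) (ha : deriv f x₀ = a / β)
    (hβ : 0 < β) (hc : 0 < c) (ht : 0 ≤ t) (hne : t ≠ c * x₀) :
    a * t - β * (c * f (t / c)) < a * (c * x₀) - β * (c * f (c * x₀ / c)) := by
  have hne' : t / c ≠ x₀ := fun h => hne (by rw [← h, mul_div_cancel₀ _ hc.ne'])
  have key := mul_lt_mul_of_pos_left
    (hf.add_deriv_mul_sub_lt hx₀.le (div_nonneg ht hc.le) hne' hfd) (mul_pos hβ hc)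
  rw [ha] at key
  rw [mul_div_cancel_left₀ _ hc.ne']
  have hlin : β * c * (a / β * (t / c - x₀)) = a * t - a * (c * x₀) := by
    field_simp
  rw [mul_add, hlin] at key
  linarith

theorem StrictMonoOn.strictMono_of_rightInverse {α β : Type*} [LinearOrder α] [Preorder β]
    {φ : α → β} {g : β → α} {s : Set α} (hφ : StrictMonoOn φ s) (hgs : ∀ y, g y ∈ s)
    (hφg : ∀ y, φ (g y) = y) : StrictMono g := fun a b hab =>
  (hφ.lt_iff_lt (hgs a) (hgs b)).1 (by rwa [hφg, hφg])

theorem StrictMono.continuous_of_isOpen_range {α β : Type*} [LinearOrder α] [TopologicalSpace α]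
    [OrderTopology α] [LinearOrder β] [TopologicalSpace β] [OrderTopology β] [DenselyOrdered β]
    {g : α → β} (hg : StrictMono g) (hrange : IsOpen (Set.range g)) : Continuous g :=
  continuous_iff_continuousAt.2 fun a =>
    (hg.strictMonoOn Set.univ).continuousAt_of_image_mem_nhds Filter.univ_mem
      (by rw [Set.image_univ]; exact hrange.mem_nhds (Set.mem_range_self a))

section PartialSumObjective

variable {n : ℕ} {S : Finset (Fin n)} {r q : Fin n → ℝ} {β : ℝ}

theorem pobj_eq_of_sum_eq_one (f : ℝ → ℝ) {p : Fin n → ℝ} (hp : ∑ i, p i = 1) (μ : ℝ) :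
    pobj n S r q β f p = ∑ i ∈ S, ((r i + μ) * p i - β * (q i * f (p i / q i)))
      + ∑ i ∈ Sᶜ, (r i + μ) * p i - μ := by
  have hfull : ∑ i, (r i + μ) * p i = ∑ i, r i * p i + μ := by
    simp only [add_mul, sum_add_distrib, ← mul_sum, hp, mul_one]
  rw [← sum_add_sum_compl S] at hfull
  rw [pobj, sum_sub_distrib, ← mul_sum]
  linarith

theorem eq_of_mem_simplex_of_eqOn {p p' : Fin n → ℝ} (hp : p ∈ simplex n) (hp' : p' ∈ simplex n)
    (hp'_out : ∀ i ∉ S, p' i = 0) (heq : ∀ i ∈ S, p i = p' i) : p = p' := by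
  have hout : ∑ i ∈ Sᶜ, p i = 0 := by
    have h := sum_add_sum_compl S p
    have h' := sum_add_sum_compl S p'
    rw [sum_congr rfl heq] at h
    rw [sum_eq_zero fun i hi => hp'_out i (mem_compl.1 hi)] at h'
    linarith [hp.2, hp'.2]
  funext i
  by_cases hi : i ∈ S
  · exact heq i hi
  · rw [hp'_out i hi]
    exact (sum_eq_zero_iff_of_nonneg fun j _ => hp.1 j).1 hout i (mem_compl.2 hi)

variable (S r q β) (finv : ℝ → ℝ)

noncomputable def tiltedMass (μ : ℝ) : ℝ :=
  ∑ i ∈ S, q i * finv ((r i + μ) / β)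

noncomputable def tiltedPoint (μ : ℝ) : Fin n → ℝ :=
  fun i => if i ∈ S then q i * finv ((r i + μ) / β) else 0

variable {S r q β finv}

theorem continuous_tiltedMass (hfinv : Continuous finv) :
    Continuous (tiltedMass S r q β finv) := by
  unfold tiltedMass
  fun_prop

theorem strictMono_tiltedMass (hfinv : StrictMono finv) (hS : S.Nonempty)
    (hq : ∀ i, 0 < q i) (hβ : 0 < β) : StrictMono (tiltedMass S r q β finv) :=
  fun _ _ hμ => sum_lt_sum_of_nonempty hS fun i _ =>
    mul_lt_mul_of_pos_left (hfinv (by gcongr)) (hq i)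

theorem exists_tiltedMass_eq_one (hfinv_cont : Continuous finv) (hfinv_mono : Monotone finv)
    {y₀ : ℝ} (hy₀ : finv y₀ ≤ 1) (hS : S.Nonempty) (hq : q ∈ simplex n) (hβ : 0 < β)
    {μ₁ : ℝ} (hμ₁ : 1 ≤ tiltedMass S r q β finv μ₁) :
    ∃ μ, tiltedMass S r q β finv μ = 1 := by
  set μ₀ := β * y₀ - S.sup' hS r
  have hμ₀ : tiltedMass S r q β finv μ₀ ≤ 1 := calc
    tiltedMass S r q β finv μ₀ ≤ ∑ i ∈ S, q i := sum_le_sum fun i hi => by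
      have hri : (r i + μ₀) / β ≤ y₀ := by
        rw [div_le_iff₀ hβ]
        linarith [le_sup' r hi]
      exact mul_le_of_le_one_right (hq.1 i) ((hfinv_mono hri).trans hy₀)
    _ ≤ ∑ i, q i := sum_le_univ_sum_of_nonneg hq.1
    _ = 1 := hq.2
  obtain ⟨μ, -, hμ⟩ := intermediate_value_uIcc (continuous_tiltedMass hfinv_cont).continuousOn
    (Set.mem_uIcc.2 (Or.inl ⟨hμ₀, hμ₁⟩) : (1 : ℝ) ∈ Set.uIcc _ (tiltedMass S r q β finv μ₁))
  exact ⟨μ, hμ⟩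

theorem tiltedPoint_mem_simplex (hfinv_pos : ∀ y, 0 < finv y) (hq : ∀ i, 0 < q i) {μ : ℝ}
    (hμ : tiltedMass S r q β finv μ = 1) : tiltedPoint S r q β finv μ ∈ simplex n := by
  refine ⟨fun i => ?_, ?_⟩
  · unfold tiltedPoint
    split_ifs
    exacts [(mul_pos (hq i) (hfinv_pos _)).le, le_rfl]
  · simp only [tiltedPoint, sum_ite_mem, univ_inter]
    exact hμ

theorem pobj_lt_pobj_tiltedPoint {f : ℝ → ℝ} (hf : StrictConvexOn ℝ (Set.Ici 0) f)
    (hfd : ∀ t ∈ Set.Ioi (0 : ℝ), DifferentiableAt ℝ f t) (hfinv_pos : ∀ y, 0 < finv y)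
    (hfinv_right : ∀ y, deriv f (finv y) = y) (hq : ∀ i, 0 < q i) (hβ : 0 < β) {μ : ℝ}
    (hμ : tiltedMass S r q β finv μ = 1) (hout : ∀ i ∉ S, r i + μ ≤ 0)
    {p : Fin n → ℝ} (hp : p ∈ simplex n) (hne : p ≠ tiltedPoint S r q β finv μ) :
    pobj n S r q β f p < pobj n S r q β f (tiltedPoint S r q β finv μ) := by
  set ps := tiltedPoint S r q β finv μ
  have hps := tiltedPoint_mem_simplex hfinv_pos hq hμ
  have hps_in : ∀ i ∈ S, ps i = q i * finv ((r i + μ) / β) := fun i hi => if_pos hi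
  have hps_out : ∀ i ∉ S, ps i = 0 := fun i hi => if_neg hi
  have hterm : ∀ i ∈ S, p i ≠ ps i →
      (r i + μ) * p i - β * (q i * f (p i / q i)) < (r i + μ) * ps i - β * (q i * f (ps i / q i)) :=
    fun i hi hpi => by
      rw [hps_in i hi] at hpi ⊢
      exact hf.linear_sub_perspective_lt (hfinv_pos _) (hfd _ (hfinv_pos _)) (hfinv_right _) hβ
        (hq i) (hp.1 i) hpi
  obtain ⟨j, hj, hpj⟩ : ∃ j ∈ S, p j ≠ ps j := by
    by_contra! h
    exact hne (eq_of_mem_simplex_of_eqOn hp hps hps_out h)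
  have hin := sum_lt_sum (fun i hi => (eq_or_ne (p i) (ps i)).elim (fun h => by rw [h])
    fun h => (hterm i hi h).le) ⟨j, hj, hterm j hj hpj⟩
  have hout_p : ∑ i ∈ Sᶜ, (r i + μ) * p i ≤ 0 :=
    sum_nonpos fun i hi => mul_nonpos_of_nonpos_of_nonneg (hout i (mem_compl.1 hi)) (hp.1 i)
  have hout_ps : ∑ i ∈ Sᶜ, (r i + μ) * ps i = 0 :=
    sum_eq_zero fun i hi => by rw [hps_out i (mem_compl.1 hi), mul_zero]
  rw [pobj_eq_of_sum_eq_one f hp.2 μ, pobj_eq_of_sum_eq_one f hps.2 μ]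
  linarith

end PartialSumObjective

theorem stmt11_general (f : ℝ → ℝ)
    (hf_cont : ContinuousOn f (Set.Ici 0))
    (hf_diff : ∀ t ∈ Set.Ioi (0 : ℝ), DifferentiableAt ℝ f t)
    (hmono : StrictMonoOn (deriv f) (Set.Ioi 0))
    (finv : ℝ → ℝ)
    (hfinv_pos : ∀ y : ℝ, 0 < finv y)
    (hfinv_right : ∀ y : ℝ, deriv f (finv y) = y)
    (hfinv_left : ∀ t : ℝ, 0 < t → finv (deriv f t) = t)
    (n : ℕ) (S : Finset (Fin n))
    (hSne : S.Nonempty)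
    (hSc : (Sᶜ : Finset (Fin n)).Nonempty)
    (r q : Fin n → ℝ)
    (hq : q ∈ simplex n) (hq_pos : ∀ i, 0 < q i)
    (β : ℝ) (hβ : 0 < β)
    (hz : 1 ≤ ∑ i ∈ S, q i * finv ((r i - (Sᶜ : Finset (Fin n)).sup' hSc r) / β)) :
    (∃ μ : ℝ, ∑ i ∈ S, q i * finv ((r i + μ) / β) = 1) ∧
    ∀ μ : ℝ, (∑ i ∈ S, q i * finv ((r i + μ) / β) = 1) →
      (fun i : Fin n => if i ∈ S then q i * finv ((r i + μ) / β) else 0) ∈ simplex n ∧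
      (∀ p' ∈ simplex n, pobj n S r q β f p' ≤
        pobj n S r q β f (fun i : Fin n => if i ∈ S then q i * finv ((r i + μ) / β) else 0)) ∧
      (∀ p ∈ simplex n, (∀ p' ∈ simplex n, pobj n S r q β f p' ≤ pobj n S r q β f p) →
        p = (fun i : Fin n => if i ∈ S then q i * finv ((r i + μ) / β) else 0)) := by
  set R := (Sᶜ : Finset (Fin n)).sup' hSc r
  have hf : StrictConvexOn ℝ (Set.Ici 0) f :=
    StrictMonoOn.strictConvexOn_of_deriv (convex_Ici 0) hf_cont (by rwa [interior_Ici])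
  have hfinv_mono : StrictMono finv := hmono.strictMono_of_rightInverse hfinv_pos hfinv_right
  have hrange : Set.range finv = Set.Ioi 0 := Set.Subset.antisymm
    (Set.range_subset_iff.2 hfinv_pos) fun t ht => ⟨deriv f t, hfinv_left t ht⟩
  have hfinv_cont := hfinv_mono.continuous_of_isOpen_range (hrange ▸ isOpen_Ioi)
  have hR : 1 ≤ tiltedMass S r q β finv (-R) := by
    simpa only [tiltedMass, ← sub_eq_add_neg] using hz
  refine ⟨exists_tiltedMass_eq_one hfinv_cont hfinv_mono.monotone (hfinv_left 1 one_pos).le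
    hSne hq hβ hR, fun μ hμ => ?_⟩
  have hout : ∀ i ∉ S, r i + μ ≤ 0 := fun i hi => by
    have hμR : μ ≤ -R := ((strictMono_tiltedMass hfinv_mono hSne hq_pos hβ).le_iff_le).1
      (hμ.trans_le hR)
    linarith [le_sup' r (mem_compl.2 hi)]
  set ps := tiltedPoint S r q β finv μ
  have hps : ps ∈ simplex n := tiltedPoint_mem_simplex hfinv_pos hq_pos hμ
  have hlt : ∀ p ∈ simplex n, p ≠ ps → pobj n S r q β f p < pobj n S r q β f ps :=
    fun p hp => pobj_lt_pobj_tiltedPoint hf hf_diff hfinv_pos hfinv_right hq_pos hβ hμ hout hp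
  refine ⟨hps, fun p hp => ?_, fun p hp hmax => ?_⟩
  · rcases eq_or_ne p ps with rfl | hne
    exacts [le_rfl, (hlt p hp hne).le]
  · by_contra hne
    exact (hmax ps hps).not_gt (hlt p hp hne)

/-- optimal solutions of the partial-sum problem, second case:
for convex `f` whose derivative is a strictly increasing bijection from `(0,∞)`
onto `ℝ` with inverse `finv`, setting `r̂ = max_{i∉S} rᵢ` and
`zᵢ = qᵢ (f')⁻¹((rᵢ − r̂)/β)`, if `Σ_{i∈S} zᵢ ≥ 1` then there is `μ ∈ ℝ` with
`Σ_{i∈S} qᵢ (f')⁻¹((rᵢ + μ)/β) = 1`, and for any such `μ` the vector `p*` with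
`p*ᵢ = qᵢ (f')⁻¹((rᵢ + μ)/β)` on `S` and `p*ᵢ = 0` off `S` is the unique
maximizer of `h` over the simplex. -/
theorem stmt11 (f : ℝ → ℝ)
    (hconv : ConvexOn ℝ (Set.Ici 0) f)
    (hf_cont : ContinuousOn f (Set.Ici 0))
    (hf_diff : ∀ t ∈ Set.Ioi (0 : ℝ), DifferentiableAt ℝ f t)
    (hmono : StrictMonoOn (deriv f) (Set.Ioi 0))
    (finv : ℝ → ℝ)
    (hfinv_pos : ∀ y : ℝ, 0 < finv y)
    (hfinv_right : ∀ y : ℝ, deriv f (finv y) = y)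
    (hfinv_left : ∀ t : ℝ, 0 < t → finv (deriv f t) = t)
    (n : ℕ) (hn : 2 ≤ n) (S : Finset (Fin n)) (hS : S ⊂ Finset.univ)
    (hSne : S.Nonempty)
    (hSc : (Sᶜ : Finset (Fin n)).Nonempty)
    (r q : Fin n → ℝ)
    (hq : q ∈ simplex n) (hq_pos : ∀ i, 0 < q i)
    (β : ℝ) (hβ : 0 < β)
    (hz : 1 ≤ ∑ i ∈ S, q i * finv ((r i - (Sᶜ : Finset (Fin n)).sup' hSc r) / β)) :
    (∃ μ : ℝ, ∑ i ∈ S, q i * finv ((r i + μ) / β) = 1) ∧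
    ∀ μ : ℝ, (∑ i ∈ S, q i * finv ((r i + μ) / β) = 1) →
      (fun i : Fin n => if i ∈ S then q i * finv ((r i + μ) / β) else 0) ∈ simplex n ∧
      (∀ p' ∈ simplex n, pobj n S r q β f p' ≤
        pobj n S r q β f (fun i : Fin n => if i ∈ S then q i * finv ((r i + μ) / β) else 0)) ∧
      (∀ p ∈ simplex n, (∀ p' ∈ simplex n, pobj n S r q β f p' ≤ pobj n S r q β f p) →
        p = (fun i : Fin n => if i ∈ S then q i * finv ((r i + μ) / β) else 0)) :=
  stmt11_general f hf_cont hf_diff hmono finv hfinv_pos hfinv_right hfinv_left n S hSne hSc r q hq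
    hq_pos β hβ hz
end
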